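/- Let T, S ∈ B_A(H). Then 2‖T^{♯_A}S‖_A ≤ ‖TT^{♯_A} + SS^{♯_A}‖_A. -/

import Mathlib

open ContinuousLinearMap

/-- The `A`-seminorm of a vector: `‖x‖_A = √⟨Ax, x⟩`. -/
noncomputable def vnormA {H : Type*} [NormedAddCommGroup H] [InnerProductSpace ℂ H]
    (A : H →L[ℂ] H) (x : H) : ℝ :=
  Real.sqrt (RCLike.re (inner ℂ (A x) x : ℂ))

/-- `T` is `A`-bounded, i.e. `T ∈ B_{A^{1/2}}(H)`. -/
def ABounded {H : Type*} [NormedAddCommGroup H] [InnerProductSpace ℂ H]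
    (A T : H →L[ℂ] H) : Prop :=
  ∃ c : ℝ, 0 < c ∧ ∀ x, vnormA A (T x) ≤ c * vnormA A x

/-- The `A`-operator seminorm `‖T‖_A = sup{‖Tx‖_A : ‖x‖_A = 1}`. -/
noncomputable def opNormA {H : Type*} [NormedAddCommGroup H] [InnerProductSpace ℂ H]
    (A T : H →L[ℂ] H) : ℝ :=
  sSup {c : ℝ | ∃ x : H, vnormA A x = 1 ∧ c = vnormA A (T x)}

/-- The `A`-numerical radius `ω_A(T) = sup{|⟨ATx, x⟩| : ‖x‖_A = 1}`. -/
noncomputable def wA {H : Type*} [NormedAddCommGroup H] [InnerProductSpace ℂ H]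
    (A T : H →L[ℂ] H) : ℝ :=
  sSup {c : ℝ | ∃ x : H, vnormA A x = 1 ∧ c = ‖(inner ℂ (A (T x)) x : ℂ)‖}

/-- `Ts` is the reduced (Douglas) solution of `AX = T*A`, i.e. `Ts = T^{♯_A}`. -/
def IsReducedAdjoint {H : Type*} [NormedAddCommGroup H] [InnerProductSpace ℂ H]
    [CompleteSpace H] (A T Ts : H →L[ℂ] H) : Prop :=
  A ∘L Ts = (ContinuousLinearMap.adjoint T) ∘L A ∧
    ∀ y, Ts y ∈ closure (Set.range A)

/-- The `2 × 2` operator matrix `[[P, Q], [R, S]]` acting on `H ⊕ H` (with the `ℓ²` product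
inner product). -/
noncomputable def blk {H : Type*} [NormedAddCommGroup H] [InnerProductSpace ℂ H]
    (P Q R S : H →L[ℂ] H) : WithLp 2 (H × H) →L[ℂ] WithLp 2 (H × H) :=
  letI e := (WithLp.prodContinuousLinearEquiv 2 ℂ H H)
  (e.symm.toContinuousLinearMap) ∘L
    ((P.comp (fst ℂ H H) + Q.comp (snd ℂ H H)).prod
      (R.comp (fst ℂ H H) + S.comp (snd ℂ H H))) ∘L
    (e.toContinuousLinearMap)

/-- `𝔸 = diag(A, A)` on `H ⊕ H`. -/
noncomputable def AA {H : Type*} [NormedAddCommGroup H] [InnerProductSpace ℂ H]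
    (A : H →L[ℂ] H) : WithLp 2 (H × H) →L[ℂ] WithLp 2 (H × H) :=
  blk A 0 0 A

/-!
Write `A = R† R`, so that `‖x‖_A = ‖R x‖` and `A T♯ = T* A` becomes
`⟪R T u, R w⟫ = ⟪R u, R T♯ w⟫`. Then `D = T T♯ + S S♯` is `A`-symmetric with
`⟪R D w, R w⟫ = ‖R T♯ w‖² + ‖R S♯ w‖²`, and Cauchy–Schwarz turns this into
`‖R (T u + S v)‖² ≤ ‖D‖_A (‖R u‖² + ‖R v‖²)`. For `‖R x‖ = 1`, taking `v = x` and
`u = T♯ S x / ‖T♯ S x‖_A` gives `Re ⟪R T u, R S x⟫ = ‖T♯ S x‖_A`, and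
`4 Re ⟪a, b⟫ ≤ ‖a + b‖²` yields `4 ‖T♯ S x‖_A ≤ 2 ‖D‖_A`.

The supremum defining `‖D‖_A` must be shown to be finite (otherwise `sSup` is `0`). This
follows from `A`-symmetry alone: `‖R X x‖² ≤ ‖R x‖ ‖R X² x‖`, iterated along the powers `2 ^ n`,
gives `‖R X x‖ ≤ ‖X‖ ‖R x‖`.
-/

open scoped InnerProductSpace
open Filter Topology RCLike

section

variable {H K : Type*} [NormedAddCommGroup H] [InnerProductSpace ℂ H]
  [NormedAddCommGroup K] [InnerProductSpace ℂ K]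

theorem ContinuousLinearMap.IsPositive.exists_eq_adjoint_comp_self [CompleteSpace H]
    {A : H →L[ℂ] H} (hA : A.IsPositive) : ∃ R : H →L[ℂ] H, A = adjoint R ∘L R :=
  CStarAlgebra.nonneg_iff_eq_star_mul_self.mp ((nonneg_iff_isPositive A).mpr hA)

theorem vnormA_adjoint_comp_self [CompleteSpace H] [CompleteSpace K] (R : H →L[ℂ] K) (x : H) :
    vnormA (adjoint R ∘L R) x = ‖R x‖ := by
  rw [vnormA, comp_apply, adjoint_inner_left, inner_self_eq_norm_sq, Real.sqrt_sq (norm_nonneg _)]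

theorem opNormA_adjoint_comp_self [CompleteSpace H] [CompleteSpace K] (R : H →L[ℂ] K)
    (X : H →L[ℂ] H) :
    opNormA (adjoint R ∘L R) X = sSup {c : ℝ | ∃ x : H, ‖R x‖ = 1 ∧ c = ‖R (X x)‖} := by
  simp only [opNormA, vnormA_adjoint_comp_self]

theorem opNormA_nonneg (A X : H →L[ℂ] H) : 0 ≤ opNormA A X :=
  Real.sSup_nonneg fun _ ⟨_, _, hc⟩ => hc ▸ Real.sqrt_nonneg _

theorem opNormA_le {A X : H →L[ℂ] H} {M : ℝ} (hM : 0 ≤ M)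
    (h : ∀ x, vnormA A x = 1 → vnormA A (X x) ≤ M) : opNormA A X ≤ M :=
  Real.sSup_le (fun _ ⟨x, hx, hc⟩ => hc ▸ h x hx) hM

theorem norm_map_apply_le_opNormA_mul [CompleteSpace H] [CompleteSpace K] {R : H →L[ℂ] K}
    {X : H →L[ℂ] H} {C : ℝ} (hC : ∀ x, ‖R (X x)‖ ≤ C * ‖R x‖) (z : H) :
    ‖R (X z)‖ ≤ opNormA (adjoint R ∘L R) X * ‖R z‖ := by
  rcases (norm_nonneg (R z)).eq_or_lt with hz | hz
  · simpa [← hz] using hC z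
  have hz' : ‖R ((‖R z‖ : ℂ)⁻¹ • z)‖ = 1 := by simp [norm_smul, hz.ne']
  have hbdd : BddAbove {c : ℝ | ∃ x : H, ‖R x‖ = 1 ∧ c = ‖R (X x)‖} :=
    ⟨C, fun _ ⟨x, hx, hc⟩ => hc ▸ by simpa [hx] using hC x⟩
  rw [opNormA_adjoint_comp_self]
  calc ‖R (X z)‖ = ‖R (X ((‖R z‖ : ℂ)⁻¹ • z))‖ * ‖R z‖ := by
        simp only [map_smul, norm_smul, norm_inv, Complex.norm_real, norm_norm]
        field_simp
    _ ≤ _ := by gcongr; exact le_csSup hbdd ⟨_, hz', rfl⟩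

/-- With `A = R† R`, this is `⟪A T u, w⟫ = ⟪A u, Ts w⟫`. -/
def IsAdjointPairWrt (R : H →L[ℂ] K) (T Ts : H →L[ℂ] H) : Prop :=
  ∀ u w, ⟪R (T u), R w⟫_ℂ = ⟪R u, R (Ts w)⟫_ℂ

namespace IsAdjointPairWrt

variable {R : H →L[ℂ] K}

theorem of_comp_eq [CompleteSpace H] [CompleteSpace K] {T Ts : H →L[ℂ] H}
    (h : (adjoint R ∘L R) ∘L Ts = adjoint T ∘L (adjoint R ∘L R)) : IsAdjointPairWrt R T Ts :=
  fun u w => by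
    have hw : adjoint R (R (Ts w)) = adjoint T (adjoint R (R w)) := congr($h w)
    rw [← adjoint_inner_right, ← adjoint_inner_right, ← adjoint_inner_right, hw]

theorem pow {X : H →L[ℂ] H} (hX : IsAdjointPairWrt R X X) (k : ℕ) :
    IsAdjointPairWrt R (X ^ k) (X ^ k) := by
  induction k with
  | zero => exact fun _ _ => rfl
  | succ k ih =>
    intro u w
    rw [pow_succ', mul_apply_eq_comp, hX, ih, ← mul_apply_eq_comp, ← pow_succ, ← pow_succ']

variable {T S Ts Ss : H →L[ℂ] H}

theorem inner_comp_add_comp_apply (hT : IsAdjointPairWrt R T Ts) (hS : IsAdjointPairWrt R S Ss)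
    (u w : H) :
    ⟪R ((T ∘L Ts + S ∘L Ss) u), R w⟫_ℂ = ⟪R (Ts u), R (Ts w)⟫_ℂ + ⟪R (Ss u), R (Ss w)⟫_ℂ := by
  rw [add_apply, map_add, inner_add_left, comp_apply, comp_apply, hT, hS]

theorem comp_add_comp (hT : IsAdjointPairWrt R T Ts) (hS : IsAdjointPairWrt R S Ss) :
    IsAdjointPairWrt R (T ∘L Ts + S ∘L Ss) (T ∘L Ts + S ∘L Ss) := fun u w => by
  rw [inner_comp_add_comp_apply hT hS, ← inner_conj_symm (R u), inner_comp_add_comp_apply hT hS,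
    map_add, inner_conj_symm, inner_conj_symm]

end IsAdjointPairWrt

theorem le_of_forall_pow_two_pow_mul_le {a b c C : ℝ} (hb : 0 < b) (hc : 0 ≤ c)
    (h : ∀ n : ℕ, a ^ 2 ^ n * b ≤ c ^ 2 ^ n * C) : a ≤ c := by
  by_contra! hca
  have ha : 0 < a := hc.trans_lt hca
  have hlim : Tendsto (fun n : ℕ => (c / a) ^ 2 ^ n * C) atTop (𝓝 0) := by
    simpa using ((tendsto_pow_atTop_nhds_zero_of_lt_one (div_nonneg hc ha.le)
      ((div_lt_one ha).2 hca)).comp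
        (tendsto_pow_atTop_atTop_of_one_lt (α := ℕ) one_lt_two)).mul_const C
  have hb' : b ≤ 0 := ge_of_tendsto' hlim fun n => by
    rw [div_pow, div_mul_eq_mul_div, le_div_iff₀ (by positivity)]
    linarith [h n]
  linarith

section Symmetric

variable {R : H →L[ℂ] K} {X : H →L[ℂ] H}

theorem norm_map_pow_apply_sq_le (hX : IsAdjointPairWrt R X X) (k : ℕ) (x : H) :
    ‖R ((X ^ k) x)‖ ^ 2 ≤ ‖R x‖ * ‖R ((X ^ (2 * k)) x)‖ :=
  calc ‖R ((X ^ k) x)‖ ^ 2 = re ⟪R ((X ^ k) x), R ((X ^ k) x)⟫_ℂ := by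
        rw [inner_self_eq_norm_sq]
    _ = re ⟪R x, R ((X ^ (2 * k)) x)⟫_ℂ := by
        rw [hX.pow, two_mul, pow_add, mul_apply_eq_comp]
    _ ≤ ‖R x‖ * ‖R ((X ^ (2 * k)) x)‖ := re_inner_le_norm _ _

theorem norm_map_apply_pow_two_pow_le (hX : IsAdjointPairWrt R X X) (x : H) (n : ℕ) :
    ‖R (X x)‖ ^ 2 ^ n ≤ ‖R x‖ ^ (2 ^ n - 1) * ‖R ((X ^ 2 ^ n) x)‖ := by
  induction n with
  | zero => simp
  | succ n ih =>
    have h1 : 1 ≤ 2 ^ n := Nat.one_le_two_pow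
    calc ‖R (X x)‖ ^ 2 ^ (n + 1) = (‖R (X x)‖ ^ 2 ^ n) ^ 2 := by rw [pow_succ, pow_mul]
      _ ≤ (‖R x‖ ^ (2 ^ n - 1) * ‖R ((X ^ 2 ^ n) x)‖) ^ 2 := by gcongr
      _ = ‖R x‖ ^ (2 * (2 ^ n - 1)) * ‖R ((X ^ 2 ^ n) x)‖ ^ 2 := by ring
      _ ≤ ‖R x‖ ^ (2 * (2 ^ n - 1)) * (‖R x‖ * ‖R ((X ^ (2 * 2 ^ n)) x)‖) := by
          gcongr; exact norm_map_pow_apply_sq_le hX _ x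
      _ = ‖R x‖ ^ (2 ^ (n + 1) - 1) * ‖R ((X ^ 2 ^ (n + 1)) x)‖ := by
          rw [← mul_assoc, ← pow_succ, pow_succ' 2 n]
          congr 3
          omega

theorem norm_map_apply_le_opNorm_mul (hX : IsAdjointPairWrt R X X) (x : H) :
    ‖R (X x)‖ ≤ ‖X‖ * ‖R x‖ := by
  rcases (norm_nonneg (R x)).eq_or_lt with hx | hx
  · have := norm_map_pow_apply_sq_le hX 1 x
    rw [← hx, zero_mul, pow_one] at this
    rw [← hx, mul_zero]
    nlinarith [norm_nonneg (R (X x))]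
  refine le_of_forall_pow_two_pow_mul_le (C := ‖R‖ * ‖x‖) hx (by positivity) fun n => ?_
  calc ‖R (X x)‖ ^ 2 ^ n * ‖R x‖
      ≤ ‖R x‖ ^ (2 ^ n - 1) * ‖R ((X ^ 2 ^ n) x)‖ * ‖R x‖ := by
        gcongr; exact norm_map_apply_pow_two_pow_le hX x n
    _ = ‖R x‖ ^ 2 ^ n * ‖R ((X ^ 2 ^ n) x)‖ := by
        rw [mul_right_comm, ← pow_succ, Nat.sub_add_cancel Nat.one_le_two_pow]
    _ ≤ ‖R x‖ ^ 2 ^ n * (‖R‖ * (‖X‖ ^ 2 ^ n * ‖x‖)) := by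
        gcongr
        refine (R.le_opNorm _).trans (mul_le_mul_of_nonneg_left ?_ (norm_nonneg R))
        exact ((X ^ 2 ^ n).le_opNorm x).trans
          (mul_le_mul_of_nonneg_right (norm_pow_le' X (by positivity)) (norm_nonneg x))
    _ = (‖X‖ * ‖R x‖) ^ 2 ^ n * (‖R‖ * ‖x‖) := by ring

end Symmetric

section RowOperator

variable [CompleteSpace H] [CompleteSpace K] {R : H →L[ℂ] K} {T S Ts Ss : H →L[ℂ] H}
  (hT : IsAdjointPairWrt R T Ts) (hS : IsAdjointPairWrt R S Ss)
include hT hS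

theorem norm_map_add_sq_le (u v : H) :
    ‖R (T u + S v)‖ ^ 2 ≤
      opNormA (adjoint R ∘L R) (T ∘L Ts + S ∘L Ss) * (‖R u‖ ^ 2 + ‖R v‖ ^ 2) := by
  set M := opNormA (adjoint R ∘L R) (T ∘L Ts + S ∘L Ss)
  set w := T u + S v
  have hw : ‖R w‖ ^ 2 ≤ ‖R u‖ * ‖R (Ts w)‖ + ‖R v‖ * ‖R (Ss w)‖ :=
    calc ‖R w‖ ^ 2 = re ⟪R u, R (Ts w)⟫_ℂ + re ⟪R v, R (Ss w)⟫_ℂ := by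
          rw [← inner_self_eq_norm_sq (𝕜 := ℂ), ← hT, ← hS, ← map_add, ← inner_add_left,
            ← map_add]
      _ ≤ _ := add_le_add (re_inner_le_norm _ _) (re_inner_le_norm _ _)
  clear_value w
  have hD : ‖R (Ts w)‖ ^ 2 + ‖R (Ss w)‖ ^ 2 ≤ M * ‖R w‖ ^ 2 :=
    calc ‖R (Ts w)‖ ^ 2 + ‖R (Ss w)‖ ^ 2 = re ⟪R ((T ∘L Ts + S ∘L Ss) w), R w⟫_ℂ := by
          rw [hT.inner_comp_add_comp_apply hS, map_add, inner_self_eq_norm_sq,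
            inner_self_eq_norm_sq]
      _ ≤ ‖R ((T ∘L Ts + S ∘L Ss) w)‖ * ‖R w‖ := re_inner_le_norm _ _
      _ ≤ M * ‖R w‖ * ‖R w‖ := by
          gcongr
          exact norm_map_apply_le_opNormA_mul
            (norm_map_apply_le_opNorm_mul (hT.comp_add_comp hS)) w
      _ = M * ‖R w‖ ^ 2 := by ring
  rcases (sq_nonneg ‖R w‖).eq_or_lt with hw0 | hw0
  · rw [← hw0]
    exact mul_nonneg (opNormA_nonneg _ _) (by positivity)
  refine le_of_mul_le_mul_right ?_ hw0
  calc ‖R w‖ ^ 2 * ‖R w‖ ^ 2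
      ≤ (‖R u‖ * ‖R (Ts w)‖ + ‖R v‖ * ‖R (Ss w)‖) ^ 2 := by
        rw [← sq]; exact pow_le_pow_left₀ (sq_nonneg _) hw 2
    _ ≤ (‖R u‖ ^ 2 + ‖R v‖ ^ 2) * (‖R (Ts w)‖ ^ 2 + ‖R (Ss w)‖ ^ 2) := by
        nlinarith [sq_nonneg (‖R u‖ * ‖R (Ss w)‖ - ‖R v‖ * ‖R (Ts w)‖)]
    _ ≤ (‖R u‖ ^ 2 + ‖R v‖ ^ 2) * (M * ‖R w‖ ^ 2) := by gcongr
    _ = M * (‖R u‖ ^ 2 + ‖R v‖ ^ 2) * ‖R w‖ ^ 2 := by ring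

theorem two_mul_norm_map_comp_apply_le {x : H} (hx : ‖R x‖ = 1) :
    2 * ‖R (Ts (S x))‖ ≤ opNormA (adjoint R ∘L R) (T ∘L Ts + S ∘L Ss) := by
  rcases (norm_nonneg (R (Ts (S x)))).eq_or_lt with ha | ha
  · rw [← ha, mul_zero]
    exact opNormA_nonneg _ _
  set a := ‖R (Ts (S x))‖
  set u := a⁻¹ • Ts (S x)
  have hu : ‖R u‖ = 1 := by simp [u, a, norm_smul, ha.ne']
  have hre : re ⟪R (T u), R (S x)⟫_ℂ = a := by
    rw [hT, map_smul_of_tower, real_smul_eq_coe_smul (K := ℂ), inner_smul_real_left, smul_re,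
      inner_self_eq_norm_sq]
    field_simp
    rfl
  have hpol : 4 * re ⟪R (T u), R (S x)⟫_ℂ ≤ ‖R (T u + S x)‖ ^ 2 := by
    rw [map_add]
    nlinarith [norm_add_sq (𝕜 := ℂ) (R (T u)) (R (S x)), norm_sub_sq (𝕜 := ℂ) (R (T u)) (R (S x))]
  have := norm_map_add_sq_le hT hS u x
  rw [hu, hx] at this
  linarith

end RowOperator

end

theorem stmt15 {H : Type*} [NormedAddCommGroup H] [InnerProductSpace ℂ H] [CompleteSpace H]
    (A : H →L[ℂ] H) (hA : A.IsPositive)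
    (T S Ts Ss : H →L[ℂ] H)
    (hT : IsReducedAdjoint A T Ts) (hS : IsReducedAdjoint A S Ss) :
    2 * opNormA A (Ts ∘L S) ≤ opNormA A (T ∘L Ts + S ∘L Ss) := by
  obtain ⟨R, rfl⟩ := hA.exists_eq_adjoint_comp_self
  have hT' := IsAdjointPairWrt.of_comp_eq hT.1
  have hS' := IsAdjointPairWrt.of_comp_eq hS.1
  rw [← le_div_iff₀' two_pos]
  refine opNormA_le (div_nonneg (opNormA_nonneg _ _) zero_le_two) fun x hx => ?_
  rw [vnormA_adjoint_comp_self] at hx ⊢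
  rw [le_div_iff₀' two_pos]
  exact two_mul_norm_map_comp_apply_le hT' hS' hx
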